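/- Let h : ℝ² → ℝ be of class C² with h(x+1, x̄+1) = h(x, x̄) and h₁₂(x, x̄) < 0 for all (x, x̄) ∈ ℝ². Let φ : ℝ → ℝ be an increasing bi-Lipschitz homeomorphism with φ(x+1) = φ(x) + 1 satisfying h₂(φ⁻¹(x), x) + h₁(x, φ(x)) = 0 for all x ∈ ℝ. Define a(x) = h₂₂(φ⁻¹(x), x) + h₁₁(x, φ(x)) and b(x) = −h₁₂(φ⁻¹(x), x). Let B⁺, C⁺, B⁻, C⁻ be positive constants with B⁺ ≥ max_ℝ a(x)/b(φ(x)), C⁺ ≤ min_ℝ b(x)/b(φ(x)), B⁻ ≥ max_ℝ a(x)/b(x), C⁻ ≤ min_ℝ b(φ(x))/b(x), and suppose (B⁺)² − 4C⁺ > 0 and (B⁻)² − 4C⁻ > 0. Then for every x ∈ ℝ, a(x) ≥ b(φ(x))·D⁻ + b(x)/D⁺, where D⁺ = (B⁺ + √((B⁺)² − 4C⁺))/2 and D⁻ = (B⁻ − √((B⁻)² − 4C⁻))/(2C⁻). -/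

import Mathlib

/-!
Differencing the Euler–Lagrange equation `h₂(ψ x, x) + h₁(x, φ x) = 0` between `x` and `y > x`
and applying the mean value theorem four times gives
`c₁ · slope ψ x y + c₂ · slope φ x y = e` with `c₁ → b x`, `c₂ → b (φ x)` and `e → a x` as
`y → x⁺`. Since `slope ψ x y` is the reciprocal of a slope of `φ` at `ψ x`, passing to the upper
and lower right Dini derivatives `P ≥ p` of `φ` yields
`b (φ x) P(x) + b x / P(ψ x) ≤ a x` and `b (φ x) p(x) + b x / p(ψ x) ≤ a x`.
With the constants these become `P ≤ B⁺ - C⁺ / P ∘ ψ` and `1/p ≤ B⁻ - C⁻ p ∘ φ`, so `sup P` and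
`sup (1/p)` lie below the larger root of the corresponding quadratic: `P ≤ D⁺` and `p ≥ D⁻`.
Feeding these bounds back into the first inequality proves the claim.
-/

/-- Partial derivative of `h` with respect to its first argument. -/
noncomputable def h1 (h : ℝ → ℝ → ℝ) (x y : ℝ) : ℝ := deriv (fun u => h u y) x

/-- Partial derivative of `h` with respect to its second argument. -/
noncomputable def h2 (h : ℝ → ℝ → ℝ) (x y : ℝ) : ℝ := deriv (fun v => h x v) y

/-- Second partial derivative of `h` with respect to its first argument, twice. -/
noncomputable def h11 (h : ℝ → ℝ → ℝ) (x y : ℝ) : ℝ := deriv (fun u => h1 h u y) x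

/-- Mixed second partial derivative of `h`. -/
noncomputable def h12 (h : ℝ → ℝ → ℝ) (x y : ℝ) : ℝ := deriv (fun v => h1 h x v) y

/-- Second partial derivative of `h` with respect to its second argument, twice. -/
noncomputable def h22 (h : ℝ → ℝ → ℝ) (x y : ℝ) : ℝ := deriv (fun v => h2 h x v) y

open Filter Set Topology Function

theorem HasFDerivAt.hasDerivAt_fst_slice {E : Type*} [NormedAddCommGroup E] [NormedSpace ℝ E]
    {g : ℝ × ℝ → E} {g' : ℝ × ℝ →L[ℝ] E} {x y : ℝ} (hg : HasFDerivAt g g' (x, y)) :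
    HasDerivAt (fun u => g (u, y)) (g' (1, 0)) x :=
  hg.comp_hasDerivAt x ((hasDerivAt_id x).prodMk (hasDerivAt_const x y))

theorem HasFDerivAt.hasDerivAt_snd_slice {E : Type*} [NormedAddCommGroup E] [NormedSpace ℝ E]
    {g : ℝ × ℝ → E} {g' : ℝ × ℝ →L[ℝ] E} {x y : ℝ} (hg : HasFDerivAt g g' (x, y)) :
    HasDerivAt (fun v => g (x, v)) (g' (0, 1)) y :=
  hg.comp_hasDerivAt y ((hasDerivAt_const y x).prodMk (hasDerivAt_id y))

section SecondPartials

variable {h : ℝ → ℝ → ℝ}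

theorem h1_eq_fderiv (hh : Differentiable ℝ (uncurry h)) (x y : ℝ) :
    h1 h x y = fderiv ℝ (uncurry h) (x, y) (1, 0) :=
  (hh (x, y)).hasFDerivAt.hasDerivAt_fst_slice.deriv

theorem h2_eq_fderiv (hh : Differentiable ℝ (uncurry h)) (x y : ℝ) :
    h2 h x y = fderiv ℝ (uncurry h) (x, y) (0, 1) :=
  (hh (x, y)).hasFDerivAt.hasDerivAt_snd_slice.deriv

variable (hh : ContDiff ℝ 2 (uncurry h))
include hh

theorem differentiable_fderiv_uncurry : Differentiable ℝ (fderiv ℝ (uncurry h)) :=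
  (hh.fderiv_right (m := 1) le_rfl).differentiable one_ne_zero

theorem hasDerivAt_fderiv_apply_fst (v : ℝ × ℝ) (x y : ℝ) :
    HasDerivAt (fun u => fderiv ℝ (uncurry h) (u, y) v)
      (fderiv ℝ (fderiv ℝ (uncurry h)) (x, y) (1, 0) v) x := by
  simpa using ((differentiable_fderiv_uncurry hh (x, y)).hasFDerivAt.hasDerivAt_fst_slice).clm_apply
    (hasDerivAt_const x v)

theorem hasDerivAt_fderiv_apply_snd (v : ℝ × ℝ) (x y : ℝ) :
    HasDerivAt (fun w => fderiv ℝ (uncurry h) (x, w) v)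
      (fderiv ℝ (fderiv ℝ (uncurry h)) (x, y) (0, 1) v) y := by
  simpa using ((differentiable_fderiv_uncurry hh (x, y)).hasFDerivAt.hasDerivAt_snd_slice).clm_apply
    (hasDerivAt_const y v)

theorem continuous_fderiv_fderiv_apply (v w : ℝ × ℝ) :
    Continuous fun p => fderiv ℝ (fderiv ℝ (uncurry h)) p v w :=
  (((hh.fderiv_right (m := 1) le_rfl).continuous_fderiv one_ne_zero).clm_apply
    continuous_const).clm_apply continuous_const

theorem h11_eq_fderiv (x y : ℝ) :
    h11 h x y = fderiv ℝ (fderiv ℝ (uncurry h)) (x, y) (1, 0) (1, 0) := by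
  rw [h11, funext (h1_eq_fderiv (hh.differentiable two_ne_zero) · y)]
  exact (hasDerivAt_fderiv_apply_fst hh _ x y).deriv

theorem h12_eq_fderiv (x y : ℝ) :
    h12 h x y = fderiv ℝ (fderiv ℝ (uncurry h)) (x, y) (0, 1) (1, 0) := by
  rw [h12, funext (h1_eq_fderiv (hh.differentiable two_ne_zero) x ·)]
  exact (hasDerivAt_fderiv_apply_snd hh _ x y).deriv

theorem h22_eq_fderiv (x y : ℝ) :
    h22 h x y = fderiv ℝ (fderiv ℝ (uncurry h)) (x, y) (0, 1) (0, 1) := by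
  rw [h22, funext (h2_eq_fderiv (hh.differentiable two_ne_zero) x ·)]
  exact (hasDerivAt_fderiv_apply_snd hh _ x y).deriv

theorem hasDerivAt_h1_fst (x y : ℝ) : HasDerivAt (h1 h · y) (h11 h x y) x := by
  rw [h11_eq_fderiv hh, funext (h1_eq_fderiv (hh.differentiable two_ne_zero) · y)]
  exact hasDerivAt_fderiv_apply_fst hh _ x y

theorem hasDerivAt_h1_snd (x y : ℝ) : HasDerivAt (h1 h x ·) (h12 h x y) y := by
  rw [h12_eq_fderiv hh, funext (h1_eq_fderiv (hh.differentiable two_ne_zero) x ·)]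
  exact hasDerivAt_fderiv_apply_snd hh _ x y

theorem hasDerivAt_h2_fst (x y : ℝ) : HasDerivAt (h2 h · y) (h12 h x y) x := by
  have hd : Differentiable ℝ (uncurry h) := hh.differentiable two_ne_zero
  rw [h12_eq_fderiv hh, funext (h2_eq_fderiv hd · y), second_derivative_symmetric
    (fun p => (hd p).hasFDerivAt) (differentiable_fderiv_uncurry hh (x, y)).hasFDerivAt]
  exact hasDerivAt_fderiv_apply_fst hh _ x y

theorem hasDerivAt_h2_snd (x y : ℝ) : HasDerivAt (h2 h x ·) (h22 h x y) y := by
  rw [h22_eq_fderiv hh, funext (h2_eq_fderiv (hh.differentiable two_ne_zero) x ·)]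
  exact hasDerivAt_fderiv_apply_snd hh _ x y

theorem continuous_h11 : Continuous (uncurry (h11 h)) := by
  simpa only [uncurry_def, h11_eq_fderiv hh] using continuous_fderiv_fderiv_apply hh (1, 0) (1, 0)

theorem continuous_h12 : Continuous (uncurry (h12 h)) := by
  simpa only [uncurry_def, h12_eq_fderiv hh] using continuous_fderiv_fderiv_apply hh (0, 1) (1, 0)

theorem continuous_h22 : Continuous (uncurry (h22 h)) := by
  simpa only [uncurry_def, h22_eq_fderiv hh] using continuous_fderiv_fderiv_apply hh (0, 1) (0, 1)

end SecondPartials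

theorem exists_intermediate_slope_identity {h : ℝ → ℝ → ℝ} {φ ψ : ℝ → ℝ}
    (hh : ContDiff ℝ 2 (uncurry h)) (hφ : StrictMono φ) (hψ : StrictMono ψ)
    (hEL : ∀ x, h2 h (ψ x) x + h1 h x (φ x) = 0) {x y : ℝ} (hxy : x < y) :
    ∃ ξ₁ ∈ Ioo (ψ x) (ψ y), ∃ ξ₂ ∈ Ioo x y, ∃ ξ₃ ∈ Ioo (φ x) (φ y), ∃ ξ₄ ∈ Ioo x y,
      h12 h ξ₁ y * slope ψ x y + h22 h (ψ x) ξ₂ + h12 h y ξ₃ * slope φ x y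
        + h11 h ξ₄ (φ x) = 0 := by
  obtain ⟨ξ₁, hξ₁, e₁⟩ := exists_hasDerivAt_eq_slope (h2 h · y) (h12 h · y) (hψ hxy)
    (fun t _ => (hasDerivAt_h2_fst hh t y).continuousAt.continuousWithinAt)
    (fun t _ => hasDerivAt_h2_fst hh t y)
  obtain ⟨ξ₂, hξ₂, e₂⟩ := exists_hasDerivAt_eq_slope (h2 h (ψ x) ·) (h22 h (ψ x) ·) hxy
    (fun t _ => (hasDerivAt_h2_snd hh (ψ x) t).continuousAt.continuousWithinAt)
    (fun t _ => hasDerivAt_h2_snd hh (ψ x) t)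
  obtain ⟨ξ₃, hξ₃, e₃⟩ := exists_hasDerivAt_eq_slope (h1 h y ·) (h12 h y ·) (hφ hxy)
    (fun t _ => (hasDerivAt_h1_snd hh y t).continuousAt.continuousWithinAt)
    (fun t _ => hasDerivAt_h1_snd hh y t)
  obtain ⟨ξ₄, hξ₄, e₄⟩ := exists_hasDerivAt_eq_slope (h1 h · (φ x)) (h11 h · (φ x)) hxy
    (fun t _ => (hasDerivAt_h1_fst hh t (φ x)).continuousAt.continuousWithinAt)
    (fun t _ => hasDerivAt_h1_fst hh t (φ x))
  refine ⟨ξ₁, hξ₁, ξ₂, hξ₂, ξ₃, hξ₃, ξ₄, hξ₄, ?_⟩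
  have hψxy : ψ y - ψ x ≠ 0 := sub_ne_zero.mpr (hψ hxy).ne'
  have hφxy : φ y - φ x ≠ 0 := sub_ne_zero.mpr (hφ hxy).ne'
  have hyx : y - x ≠ 0 := sub_ne_zero.mpr hxy.ne'
  rw [e₁, e₂, e₃, e₄, slope_def_field, slope_def_field]
  field_simp
  linarith [hEL x, hEL y]

theorem tendsto_of_eventually_mem_Ioo {α : Type*} {l : Filter α} {f g k : α → ℝ} {a : ℝ}
    (hg : Tendsto g l (𝓝 a)) (hk : Tendsto k l (𝓝 a)) (h : ∀ᶠ t in l, f t ∈ Ioo (g t) (k t)) :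
    Tendsto f l (𝓝 a) :=
  tendsto_of_tendsto_of_tendsto_of_le_of_le' hg hk (h.mono fun _ ht => ht.1.le)
    (h.mono fun _ ht => ht.2.le)

theorem exists_tendsto_slope_identity {h : ℝ → ℝ → ℝ} {φ ψ : ℝ → ℝ}
    (hh : ContDiff ℝ 2 (uncurry h)) (hφ : StrictMono φ) (hψ : StrictMono ψ)
    (hφc : Continuous φ) (hψc : Continuous ψ)
    (hEL : ∀ x, h2 h (ψ x) x + h1 h x (φ x) = 0) (x : ℝ) :
    ∃ c₁ c₂ e : ℝ → ℝ, Tendsto c₁ (𝓝[>] x) (𝓝 (-h12 h (ψ x) x)) ∧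
      Tendsto c₂ (𝓝[>] x) (𝓝 (-h12 h x (φ x))) ∧
      Tendsto e (𝓝[>] x) (𝓝 (h22 h (ψ x) x + h11 h x (φ x))) ∧
      ∀ᶠ y in 𝓝[>] x, c₁ y * slope ψ x y + c₂ y * slope φ x y = e y := by
  -- quantified over all `y` so that `choose` yields functions on `ℝ`; only `y > x` matters
  have hex : ∀ y, ∃ ξ₁ ξ₂ ξ₃ ξ₄ : ℝ, x < y → ξ₁ ∈ Ioo (ψ x) (ψ y) ∧ ξ₂ ∈ Ioo x y ∧
      ξ₃ ∈ Ioo (φ x) (φ y) ∧ ξ₄ ∈ Ioo x y ∧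
      h12 h ξ₁ y * slope ψ x y + h22 h (ψ x) ξ₂ + h12 h y ξ₃ * slope φ x y
        + h11 h ξ₄ (φ x) = 0 := by
    intro y
    by_cases hxy : x < y
    · obtain ⟨ξ₁, h₁, ξ₂, h₂, ξ₃, h₃, ξ₄, h₄, e⟩ :=
        exists_intermediate_slope_identity hh hφ hψ hEL hxy
      exact ⟨ξ₁, ξ₂, ξ₃, ξ₄, fun _ => ⟨h₁, h₂, h₃, h₄, e⟩⟩
    · exact ⟨0, 0, 0, 0, fun h => absurd h hxy⟩
  choose ξ₁ ξ₂ ξ₃ ξ₄ hξ using hex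
  have hev := (eventually_mem_nhdsWithin (a := x) (s := Ioi x)).mono fun y hy => hξ y hy
  have hid : Tendsto id (𝓝[>] x) (𝓝 x) := tendsto_id.mono_left nhdsWithin_le_nhds
  have hψx := (hψc.tendsto x).mono_left (nhdsWithin_le_nhds (s := Ioi x))
  have hφx := (hφc.tendsto x).mono_left (nhdsWithin_le_nhds (s := Ioi x))
  have t₁ := tendsto_of_eventually_mem_Ioo tendsto_const_nhds hψx (hev.mono fun _ h => h.1)
  have t₂ := tendsto_of_eventually_mem_Ioo tendsto_const_nhds hid (hev.mono fun _ h => h.2.1)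
  have t₃ := tendsto_of_eventually_mem_Ioo tendsto_const_nhds hφx (hev.mono fun _ h => h.2.2.1)
  have t₄ := tendsto_of_eventually_mem_Ioo tendsto_const_nhds hid
    (hev.mono fun _ h => h.2.2.2.1)
  refine ⟨fun y => -h12 h (ξ₁ y) y, fun y => -h12 h y (ξ₃ y),
    fun y => h22 h (ψ x) (ξ₂ y) + h11 h (ξ₄ y) (φ x), ?_, ?_, ?_,
    hev.mono fun y hy => by linarith [hy.2.2.2.2]⟩
  · exact (((continuous_h12 hh).tendsto (ψ x, x)).comp (t₁.prodMk_nhds hid)).neg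
  · exact (((continuous_h12 hh).tendsto (x, φ x)).comp (hid.prodMk_nhds t₃)).neg
  · exact (((continuous_h22 hh).tendsto (ψ x, x)).comp (tendsto_const_nhds.prodMk_nhds t₂)).add
      (((continuous_h11 hh).tendsto (x, φ x)).comp (t₄.prodMk_nhds tendsto_const_nhds))

theorem mul_liminf_add_mul_limsup_le {α : Type*} {l : Filter α} [l.NeBot]
    {u v c₁ c₂ e : α → ℝ} {β₁ β₂ γ : ℝ} (hβ₁ : 0 ≤ β₁) (hβ₂ : 0 ≤ β₂)
    (hu : IsBoundedUnder (· ≤ ·) l (fun t => |u t|))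
    (hv : IsBoundedUnder (· ≤ ·) l (fun t => |v t|))
    (hc₁ : Tendsto c₁ l (𝓝 β₁)) (hc₂ : Tendsto c₂ l (𝓝 β₂)) (he : Tendsto e l (𝓝 γ))
    (h : ∀ᶠ t in l, c₁ t * u t + c₂ t * v t = e t) :
    β₁ * liminf u l + β₂ * limsup v l ≤ γ := by
  obtain ⟨hu_le, hu_ge⟩ := isBoundedUnder_le_abs.mp hu
  obtain ⟨hv_le, hv_ge⟩ := isBoundedUnder_le_abs.mp hv
  have hmono₁ : Monotone (β₁ * ·) := monotone_mul_left_of_nonneg hβ₁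
  have hmono₂ : Monotone (β₂ * ·) := monotone_mul_left_of_nonneg hβ₂
  have hlim : Tendsto (fun t => β₂ * v t + β₁ * u t) l (𝓝 γ) := by
    have herr : Tendsto (fun t => (c₁ t - β₁) * u t + (c₂ t - β₂) * v t) l (𝓝 0) := by
      simpa using ((tendsto_sub_nhds_zero_iff.mpr hc₁).zero_mul_isBoundedUnder_le hu).add
        ((tendsto_sub_nhds_zero_iff.mpr hc₂).zero_mul_isBoundedUnder_le hv)
    refine (sub_zero γ ▸ he.sub herr).congr' ?_
    filter_upwards [h] with t ht
    rw [← ht]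
    ring
  calc β₁ * liminf u l + β₂ * limsup v l
      = limsup (fun t => β₂ * v t) l + liminf (fun t => β₁ * u t) l := by
        rw [hmono₁.map_liminf_of_continuousAt u (continuous_const_mul β₁).continuousAt
            hu_le.isCoboundedUnder_ge hu_ge,
          hmono₂.map_limsup_of_continuousAt v (continuous_const_mul β₂).continuousAt
            hv_le hv_ge.isCoboundedUnder_le, add_comm]
        rfl
    _ ≤ limsup (fun t => β₂ * v t + β₁ * u t) l :=
        le_limsup_add (hmono₂.isBoundedUnder_le_comp hv_le)
          (hmono₂.isBoundedUnder_ge_comp hv_ge).isCoboundedUnder_le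
          (hmono₁.isBoundedUnder_le_comp hu_le) (hmono₁.isBoundedUnder_ge_comp hu_ge)
    _ = γ := hlim.limsup_eq

theorem StrictMono.tendsto_nhdsGT_of_continuous {f : ℝ → ℝ} (hf : StrictMono f)
    (hc : Continuous f) (x : ℝ) : Tendsto f (𝓝[>] x) (𝓝[>] (f x)) :=
  tendsto_nhdsWithin_of_tendsto_nhds_of_eventually_within f
    ((hc.tendsto x).mono_left nhdsWithin_le_nhds) (eventually_mem_nhdsWithin.mono fun _ hy => hf hy)

theorem slope_eq_inv_slope_of_rightInverse {φ ψ : ℝ → ℝ} (h : RightInverse ψ φ) (x y : ℝ) :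
    slope ψ x y = (slope φ (ψ x) (ψ y))⁻¹ := by
  simp only [slope_def_field, h x, h y, inv_div]

noncomputable def upperRightDeriv (f : ℝ → ℝ) (x : ℝ) : ℝ := limsup (slope f x) (𝓝[>] x)

noncomputable def lowerRightDeriv (f : ℝ → ℝ) (x : ℝ) : ℝ := liminf (slope f x) (𝓝[>] x)

section BiLipschitz

variable {f : ℝ → ℝ} {K₁ K₂ : NNReal}

theorem slope_mem_Icc (hf : Monotone f) (hl : LipschitzWith K₁ f) (ha : AntilipschitzWith K₂ f)
    {x y : ℝ} (hxy : x ≠ y) : slope f x y ∈ Icc (K₂ : ℝ)⁻¹ K₁ := by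
  have hd : 0 < dist y x := dist_pos.2 hxy.symm
  have hs : slope f x y = dist (f y) (f x) / dist y x := by
    rw [← abs_of_nonneg ((hf.monotoneOn univ).slope_nonneg trivial trivial), slope_def_field,
      abs_div, Real.dist_eq, Real.dist_eq]
  rw [hs, mem_Icc, le_div_iff₀ hd, inv_mul_le_iff₀ (NNReal.coe_pos.2 ha.pos), div_le_iff₀ hd]
  exact ⟨ha.le_mul_dist y x, hl.dist_le_mul y x⟩

variable (hf : Monotone f) (hl : LipschitzWith K₁ f) (ha : AntilipschitzWith K₂ f)
include hf hl ha

theorem eventually_slope_mem_Icc (x : ℝ) : ∀ᶠ y in 𝓝[>] x, slope f x y ∈ Icc (K₂ : ℝ)⁻¹ K₁ :=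
  eventually_mem_nhdsWithin.mono fun _ hy => slope_mem_Icc hf hl ha (ne_of_lt hy)

theorem isBoundedUnder_le_slope (x : ℝ) : IsBoundedUnder (· ≤ ·) (𝓝[>] x) (slope f x) :=
  isBoundedUnder_of_eventually_le ((eventually_slope_mem_Icc hf hl ha x).mono fun _ hy => hy.2)

theorem isBoundedUnder_ge_slope (x : ℝ) : IsBoundedUnder (· ≥ ·) (𝓝[>] x) (slope f x) :=
  isBoundedUnder_of_eventually_ge ((eventually_slope_mem_Icc hf hl ha x).mono fun _ hy => hy.1)

theorem isBoundedUnder_abs_slope (x : ℝ) :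
    IsBoundedUnder (· ≤ ·) (𝓝[>] x) (fun y => |slope f x y|) :=
  isBoundedUnder_le_abs.mpr ⟨isBoundedUnder_le_slope hf hl ha x, isBoundedUnder_ge_slope hf hl ha x⟩

theorem inv_le_lowerRightDeriv (x : ℝ) : (K₂ : ℝ)⁻¹ ≤ lowerRightDeriv f x :=
  le_liminf_of_le (isBoundedUnder_le_slope hf hl ha x).isCoboundedUnder_ge
    ((eventually_slope_mem_Icc hf hl ha x).mono fun _ hy => hy.1)

theorem lowerRightDeriv_pos (x : ℝ) : 0 < lowerRightDeriv f x :=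
  (inv_pos.2 (NNReal.coe_pos.2 ha.pos)).trans_le (inv_le_lowerRightDeriv hf hl ha x)

theorem lowerRightDeriv_le_upperRightDeriv (x : ℝ) : lowerRightDeriv f x ≤ upperRightDeriv f x :=
  liminf_le_limsup (isBoundedUnder_le_slope hf hl ha x) (isBoundedUnder_ge_slope hf hl ha x)

theorem upperRightDeriv_pos (x : ℝ) : 0 < upperRightDeriv f x :=
  (lowerRightDeriv_pos hf hl ha x).trans_le (lowerRightDeriv_le_upperRightDeriv hf hl ha x)

theorem upperRightDeriv_le (x : ℝ) : upperRightDeriv f x ≤ K₁ :=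
  limsup_le_of_le (isBoundedUnder_ge_slope hf hl ha x).isCoboundedUnder_le
    ((eventually_slope_mem_Icc hf hl ha x).mono fun _ hy => hy.2)

end BiLipschitz

section Inverse

variable {φ ψ : ℝ → ℝ} {K₁ K₂ : NNReal} (hφ : StrictMono φ) (hl : LipschitzWith K₁ φ)
  (ha : AntilipschitzWith K₂ φ) (hinv : RightInverse ψ φ)
include hφ hl ha hinv

theorem inv_upperRightDeriv_le_lowerRightDeriv (x : ℝ) :
    (upperRightDeriv φ (ψ x))⁻¹ ≤ lowerRightDeriv ψ x := by
  have hψ : StrictMono ψ := (hφ.orderIsoOfRightInverse φ ψ hinv).symm.strictMono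
  have hψl : LipschitzWith K₂ ψ := ha.to_rightInverse hinv
  have hψa : AntilipschitzWith K₁ ψ := hl.to_rightInverse hinv
  refine le_of_forall_lt_imp_le_of_dense fun c hc => ?_
  rcases le_or_gt c 0 with hc0 | hc0
  · exact hc0.trans (lowerRightDeriv_pos hψ.monotone hψl hψa x).le
  have hlt : upperRightDeriv φ (ψ x) < c⁻¹ :=
    (lt_inv_comm₀ hc0 (upperRightDeriv_pos hφ.monotone hl ha _)).1 hc
  have hev : ∀ᶠ y in 𝓝[>] x, slope φ (ψ x) (ψ y) < c⁻¹ :=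
    (hψ.tendsto_nhdsGT_of_continuous hψl.continuous x).eventually
      (eventually_lt_of_limsup_lt hlt (isBoundedUnder_le_slope hφ.monotone hl ha _))
  refine le_liminf_of_le (isBoundedUnder_le_slope hψ.monotone hψl hψa x).isCoboundedUnder_ge ?_
  filter_upwards [hev, eventually_mem_nhdsWithin] with y hy hxy
  rw [slope_eq_inv_slope_of_rightInverse hinv]
  exact (le_inv_comm₀ hc0 ((hφ.strictMonoOn univ).slope_pos trivial trivial (hψ hxy).ne)).2 hy.le

theorem inv_lowerRightDeriv_le_upperRightDeriv (x : ℝ) :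
    (lowerRightDeriv φ (ψ x))⁻¹ ≤ upperRightDeriv ψ x := by
  have hψ : StrictMono ψ := (hφ.orderIsoOfRightInverse φ ψ hinv).symm.strictMono
  have hψl : LipschitzWith K₂ ψ := ha.to_rightInverse hinv
  have hψa : AntilipschitzWith K₁ ψ := hl.to_rightInverse hinv
  have hleft : LeftInverse ψ φ := hinv.leftInverse_of_injective hφ.injective
  refine le_of_forall_lt_imp_le_of_dense fun c hc => ?_
  rcases le_or_gt c 0 with hc0 | hc0
  · exact hc0.trans (upperRightDeriv_pos hψ.monotone hψl hψa x).le
  have hlt : lowerRightDeriv φ (ψ x) < c⁻¹ :=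
    (lt_inv_comm₀ hc0 (lowerRightDeriv_pos hφ.monotone hl ha _)).1 hc
  have hfreq : ∃ᶠ z in 𝓝[>] (ψ x), slope φ (ψ x) z < c⁻¹ ∧ ψ x < z :=
    (frequently_lt_of_liminf_lt (isBoundedUnder_le_slope hφ.monotone hl ha _).isCoboundedUnder_ge
      hlt).and_eventually eventually_mem_nhdsWithin
  have hφx : Tendsto φ (𝓝[>] (ψ x)) (𝓝[>] x) := by
    simpa only [hinv x] using hφ.tendsto_nhdsGT_of_continuous hl.continuous (ψ x)
  refine le_limsup_of_frequently_le (hφx.frequently (hfreq.mono fun z hz => ?_))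
    (isBoundedUnder_le_slope hψ.monotone hψl hψa x)
  rw [slope_eq_inv_slope_of_rightInverse hinv, hleft z]
  exact (le_inv_comm₀ hc0 ((hφ.strictMonoOn univ).slope_pos trivial trivial hz.2.ne)).2 hz.1.le

end Inverse

theorem le_add_sqrt_div_two_of_sq_sub_mul_add_nonpos {B C s : ℝ} (h : s ^ 2 - B * s + C ≤ 0) :
    s ≤ (B + √(B ^ 2 - 4 * C)) / 2 := by
  have := Real.abs_le_sqrt (show (2 * s - B) ^ 2 ≤ B ^ 2 - 4 * C by nlinarith)
  linarith [le_abs_self (2 * s - B)]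

/-- The supremum `S` of `q` satisfies `S ≤ B - C / S`, that is, `S² - B S + C ≤ 0`. -/
theorem le_add_sqrt_div_two_of_forall_le_sub_div {ι : Type*} {q : ι → ℝ} {σ : ι → ι} {B C : ℝ}
    (hpos : ∀ i, 0 < q i) (hbdd : BddAbove (range q)) (hC : 0 ≤ C)
    (h : ∀ i, q i ≤ B - C / q (σ i)) (i : ι) : q i ≤ (B + √(B ^ 2 - 4 * C)) / 2 := by
  have : Nonempty ι := ⟨i⟩
  have hS : ∀ j, q j ≤ ⨆ j, q j := le_ciSup hbdd
  have hSpos : 0 < ⨆ j, q j := (hpos i).trans_le (hS i)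
  have hSle : ⨆ j, q j ≤ B - C / ⨆ j, q j := ciSup_le fun j =>
    (h j).trans (sub_le_sub_left (div_le_div_of_nonneg_left hC (hpos _) (hS _)) B)
  refine (hS i).trans (le_add_sqrt_div_two_of_sq_sub_mul_add_nonpos ?_)
  have := mul_le_mul_of_nonneg_right hSle hSpos.le
  rw [sub_mul, div_mul_cancel₀ _ hSpos.ne'] at this
  nlinarith

theorem sub_sqrt_div_le_of_inv_le_add_sqrt_div {B C t : ℝ} (hC : 0 < C) (hd : 0 ≤ B ^ 2 - 4 * C)
    (ht : 0 < t) (h : t⁻¹ ≤ (B + √(B ^ 2 - 4 * C)) / 2) :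
    (B - √(B ^ 2 - 4 * C)) / (2 * C) ≤ t := by
  set r := √(B ^ 2 - 4 * C)
  have hr : r ^ 2 = B ^ 2 - 4 * C := Real.sq_sqrt hd
  have h2 : 2 ≤ t * (B + r) := by
    rw [inv_le_iff_one_le_mul₀ ht] at h
    linarith
  have hBr : 0 < B - r := by nlinarith [Real.sqrt_nonneg (B ^ 2 - 4 * C)]
  rw [div_le_iff₀ (by positivity)]
  nlinarith

section InvariantCurve

variable {h : ℝ → ℝ → ℝ} {φ ψ a b : ℝ → ℝ} {K₁ K₂ : NNReal}
  (hh : ContDiff ℝ 2 (uncurry h)) (htwist : ∀ x y, h12 h x y < 0) (hφ : StrictMono φ)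
  (hl : LipschitzWith K₁ φ) (ha : AntilipschitzWith K₂ φ) (hinv : RightInverse ψ φ)
  (hEL : ∀ x, h2 h (ψ x) x + h1 h x (φ x) = 0)
  (hA : ∀ x, a x = h22 h (ψ x) x + h11 h x (φ x)) (hB : ∀ x, b x = -h12 h (ψ x) x)
include hh htwist hφ hl ha hinv hEL hA hB

theorem mul_lowerRightDeriv_add_mul_upperRightDeriv_le (x : ℝ) :
    b x * lowerRightDeriv ψ x + b (φ x) * upperRightDeriv φ x ≤ a x ∧
      b (φ x) * lowerRightDeriv φ x + b x * upperRightDeriv ψ x ≤ a x := by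
  have hψ : StrictMono ψ := (hφ.orderIsoOfRightInverse φ ψ hinv).symm.strictMono
  have hψl : LipschitzWith K₂ ψ := ha.to_rightInverse hinv
  have hψa : AntilipschitzWith K₁ ψ := hl.to_rightInverse hinv
  have hb : ∀ y, 0 ≤ b y := fun y => by linarith [hB y, htwist (ψ y) y]
  have hbφ : b (φ x) = -h12 h x (φ x) := by
    rw [hB, hinv.leftInverse_of_injective hφ.injective x]
  obtain ⟨c₁, c₂, e, hc₁, hc₂, he, hid⟩ :=
    exists_tendsto_slope_identity hh hφ hψ hl.continuous hψl.continuous hEL x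
  rw [← hB] at hc₁
  rw [← hbφ] at hc₂
  rw [← hA] at he
  have hslopeψ := isBoundedUnder_abs_slope hψ.monotone hψl hψa x
  have hslopeφ := isBoundedUnder_abs_slope hφ.monotone hl ha x
  exact ⟨mul_liminf_add_mul_limsup_le (hb x) (hb (φ x)) hslopeψ hslopeφ hc₁ hc₂ he hid,
    mul_liminf_add_mul_limsup_le (hb (φ x)) (hb x) hslopeφ hslopeψ hc₂ hc₁ he
      (hid.mono fun _ hy => by rw [← hy, add_comm])⟩

theorem mul_upperRightDeriv_add_div_le (x : ℝ) :
    b (φ x) * upperRightDeriv φ x + b x / upperRightDeriv φ (ψ x) ≤ a x := by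
  have hb : 0 ≤ b x := by linarith [hB x, htwist (ψ x) x]
  calc b (φ x) * upperRightDeriv φ x + b x / upperRightDeriv φ (ψ x)
      = b x * (upperRightDeriv φ (ψ x))⁻¹ + b (φ x) * upperRightDeriv φ x := by ring
    _ ≤ b x * lowerRightDeriv ψ x + b (φ x) * upperRightDeriv φ x := by
      gcongr
      exact inv_upperRightDeriv_le_lowerRightDeriv hφ hl ha hinv x
    _ ≤ a x := (mul_lowerRightDeriv_add_mul_upperRightDeriv_le hh htwist hφ hl ha hinv hEL hA hB x).1

theorem mul_lowerRightDeriv_add_div_le (x : ℝ) :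
    b (φ x) * lowerRightDeriv φ x + b x / lowerRightDeriv φ (ψ x) ≤ a x := by
  have hb : 0 ≤ b x := by linarith [hB x, htwist (ψ x) x]
  calc b (φ x) * lowerRightDeriv φ x + b x / lowerRightDeriv φ (ψ x)
      = b (φ x) * lowerRightDeriv φ x + b x * (lowerRightDeriv φ (ψ x))⁻¹ := by ring
    _ ≤ b (φ x) * lowerRightDeriv φ x + b x * upperRightDeriv ψ x := by
      gcongr
      exact inv_lowerRightDeriv_le_upperRightDeriv hφ hl ha hinv x
    _ ≤ a x := (mul_lowerRightDeriv_add_mul_upperRightDeriv_le hh htwist hφ hl ha hinv hEL hA hB x).2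

theorem upperRightDeriv_le_sub_div {B C : ℝ} (hBa : ∀ x, a x / b (φ x) ≤ B)
    (hCb : ∀ x, C ≤ b x / b (φ x)) (x : ℝ) :
    upperRightDeriv φ x ≤ B - C / upperRightDeriv φ (ψ x) := by
  have hbφ : 0 < b (φ x) := by linarith [hB (φ x), htwist (ψ (φ x)) (φ x)]
  have hP := upperRightDeriv_pos hφ.monotone hl ha (ψ x)
  have hR := mul_upperRightDeriv_add_div_le hh htwist hφ hl ha hinv hEL hA hB x
  have ha' := (div_le_iff₀ hbφ).1 (hBa x)
  have hb' := div_le_div_of_nonneg_right ((le_div_iff₀ hbφ).1 (hCb x)) hP.le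
  refine le_of_mul_le_mul_left ?_ hbφ
  calc b (φ x) * upperRightDeriv φ x
      ≤ B * b (φ x) - C * b (φ x) / upperRightDeriv φ (ψ x) := by linarith
    _ = b (φ x) * (B - C / upperRightDeriv φ (ψ x)) := by ring

theorem inv_lowerRightDeriv_le_sub_div {B C : ℝ} (hBa : ∀ x, a x / b x ≤ B)
    (hCb : ∀ x, C ≤ b (φ x) / b x) (x : ℝ) :
    (lowerRightDeriv φ x)⁻¹ ≤ B - C / (lowerRightDeriv φ (φ x))⁻¹ := by
  have hbφ : 0 < b (φ x) := by linarith [hB (φ x), htwist (ψ (φ x)) (φ x)]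
  have hp := lowerRightDeriv_pos hφ.monotone hl ha (φ x)
  have hR := mul_lowerRightDeriv_add_div_le hh htwist hφ hl ha hinv hEL hA hB (φ x)
  rw [hinv.leftInverse_of_injective hφ.injective x] at hR
  have ha' := (div_le_iff₀ hbφ).1 (hBa (φ x))
  have hb' := mul_le_mul_of_nonneg_right ((le_div_iff₀ hbφ).1 (hCb (φ x))) hp.le
  rw [div_inv_eq_mul]
  refine le_of_mul_le_mul_left ?_ hbφ
  calc b (φ x) * (lowerRightDeriv φ x)⁻¹
      ≤ B * b (φ x) - C * b (φ x) * lowerRightDeriv φ (φ x) := by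
        rw [← div_eq_mul_inv]; linarith
    _ = b (φ x) * (B - C * lowerRightDeriv φ (φ x)) := by ring

theorem upperRightDeriv_le_add_sqrt_div_two {B C : ℝ} (hC : 0 ≤ C)
    (hBa : ∀ x, a x / b (φ x) ≤ B) (hCb : ∀ x, C ≤ b x / b (φ x)) (x : ℝ) :
    upperRightDeriv φ x ≤ (B + √(B ^ 2 - 4 * C)) / 2 :=
  le_add_sqrt_div_two_of_forall_le_sub_div (upperRightDeriv_pos hφ.monotone hl ha)
    ⟨K₁, forall_mem_range.2 (upperRightDeriv_le hφ.monotone hl ha)⟩ hC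
    (upperRightDeriv_le_sub_div hh htwist hφ hl ha hinv hEL hA hB hBa hCb) x

theorem sub_sqrt_div_le_lowerRightDeriv {B C : ℝ} (hC : 0 < C) (hdisc : 0 ≤ B ^ 2 - 4 * C)
    (hBa : ∀ x, a x / b x ≤ B) (hCb : ∀ x, C ≤ b (φ x) / b x) (x : ℝ) :
    (B - √(B ^ 2 - 4 * C)) / (2 * C) ≤ lowerRightDeriv φ x := by
  have hp := lowerRightDeriv_pos hφ.monotone hl ha
  refine sub_sqrt_div_le_of_inv_le_add_sqrt_div hC hdisc (hp x) ?_
  refine le_add_sqrt_div_two_of_forall_le_sub_div (fun y => inv_pos.2 (hp y)) ⟨K₂, ?_⟩ hC.le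
    (inv_lowerRightDeriv_le_sub_div hh htwist hφ hl ha hinv hEL hA hB hBa hCb) x
  exact forall_mem_range.2 fun y =>
    inv_le_of_inv_le₀ (NNReal.coe_pos.2 ha.pos) (inv_le_lowerRightDeriv hφ.monotone hl ha y)

end InvariantCurve

theorem improved_necessary_condition_general (h : ℝ → ℝ → ℝ)
    (hC2 : ContDiff ℝ 2 (fun p : ℝ × ℝ => h p.1 p.2))
    (htwist : ∀ x y, h12 h x y < 0)
    (φ ψ : ℝ → ℝ) (hmono : StrictMono φ) (K : NNReal)
    (hlip : LipschitzWith K φ) (halip : AntilipschitzWith K φ)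
    (hrinv : Function.RightInverse ψ φ)
    (hEL : ∀ x, h2 h (ψ x) x + h1 h x (φ x) = 0)
    (a b : ℝ → ℝ)
    (ha : ∀ x, a x = h22 h (ψ x) x + h11 h x (φ x))
    (hb : ∀ x, b x = -h12 h (ψ x) x)
    (Bp Cp Bm Cm : ℝ)
    (hCp0 : 0 < Cp) (hCm0 : 0 < Cm)
    (hBp : ∀ x, a x / b (φ x) ≤ Bp) (hCp : ∀ x, Cp ≤ b x / b (φ x))
    (hBm : ∀ x, a x / b x ≤ Bm) (hCm : ∀ x, Cm ≤ b (φ x) / b x)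
    (hdiscm : Bm ^ 2 - 4 * Cm > 0) :
    ∀ x : ℝ,
      b (φ x) * ((Bm - Real.sqrt (Bm ^ 2 - 4 * Cm)) / (2 * Cm))
        + b x / ((Bp + Real.sqrt (Bp ^ 2 - 4 * Cp)) / 2) ≤ a x := by
  intro x
  have hb₀ : ∀ y, 0 ≤ b y := fun y => by linarith [hb y, htwist (ψ y) y]
  calc b (φ x) * ((Bm - √(Bm ^ 2 - 4 * Cm)) / (2 * Cm)) + b x / ((Bp + √(Bp ^ 2 - 4 * Cp)) / 2)
      ≤ b (φ x) * upperRightDeriv φ x + b x / upperRightDeriv φ (ψ x) := by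
        refine add_le_add (mul_le_mul_of_nonneg_left ?_ (hb₀ _))
          (div_le_div_of_nonneg_left (hb₀ _) (upperRightDeriv_pos hmono.monotone hlip halip _) ?_)
        · exact (sub_sqrt_div_le_lowerRightDeriv hC2 htwist hmono hlip halip hrinv hEL ha hb hCm0
            hdiscm.le hBm hCm x).trans (lowerRightDeriv_le_upperRightDeriv hmono.monotone hlip halip x)
        · exact upperRightDeriv_le_add_sqrt_div_two hC2 htwist hmono hlip halip hrinv hEL ha hb
            hCp0.le hBp hCp (ψ x)
    _ ≤ a x := mul_upperRightDeriv_add_div_le hC2 htwist hmono hlip halip hrinv hEL ha hb x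

/-- the improved necessary condition for invariant curves: with the
constants `B⁺, C⁺, B⁻, C⁻` bounding `a/b∘φ`, `b/b∘φ`, `a/b`, `b∘φ/b` and whose
discriminants are positive, for every `x`,
`a(x) ≥ b(φ(x))·D⁻ + b(x)/D⁺` where `D⁺ = (B⁺+√((B⁺)²−4C⁺))/2` and
`D⁻ = (B⁻−√((B⁻)²−4C⁻))/(2C⁻)`. -/
theorem improved_necessary_condition (h : ℝ → ℝ → ℝ)
    (hC2 : ContDiff ℝ 2 (fun p : ℝ × ℝ => h p.1 p.2))
    (hper : ∀ x y, h (x + 1) (y + 1) = h x y)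
    (htwist : ∀ x y, h12 h x y < 0)
    (φ ψ : ℝ → ℝ) (hmono : StrictMono φ) (K : NNReal)
    (hlip : LipschitzWith K φ) (halip : AntilipschitzWith K φ)
    (hlinv : Function.LeftInverse ψ φ) (hrinv : Function.RightInverse ψ φ)
    (hcomm : ∀ x, φ (x + 1) = φ x + 1)
    (hEL : ∀ x, h2 h (ψ x) x + h1 h x (φ x) = 0)
    (a b : ℝ → ℝ)
    (ha : ∀ x, a x = h22 h (ψ x) x + h11 h x (φ x))
    (hb : ∀ x, b x = -h12 h (ψ x) x)
    (Bp Cp Bm Cm : ℝ)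
    (hBp0 : 0 < Bp) (hCp0 : 0 < Cp) (hBm0 : 0 < Bm) (hCm0 : 0 < Cm)
    (hBp : ∀ x, a x / b (φ x) ≤ Bp) (hCp : ∀ x, Cp ≤ b x / b (φ x))
    (hBm : ∀ x, a x / b x ≤ Bm) (hCm : ∀ x, Cm ≤ b (φ x) / b x)
    (hdiscp : Bp ^ 2 - 4 * Cp > 0) (hdiscm : Bm ^ 2 - 4 * Cm > 0) :
    ∀ x : ℝ,
      b (φ x) * ((Bm - Real.sqrt (Bm ^ 2 - 4 * Cm)) / (2 * Cm))
        + b x / ((Bp + Real.sqrt (Bp ^ 2 - 4 * Cp)) / 2) ≤ a x :=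
  improved_necessary_condition_general h hC2 htwist φ ψ hmono K hlip halip hrinv hEL a b ha hb Bp Cp
    Bm Cm hCp0 hCm0 hBp hCp hBm hCm hdiscm
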